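/- Let l ≥ 1 and let G be an abelian group containing elements a, b, c such that: b has order 3, c has order 3^l, the subgroup generated by b and c is an internal direct sum isomorphic to ℤ/3 ⊕ ℤ/3^l, and 3a = b + c. Then the subgroup of G generated by a, b, c is isomorphic to ℤ/3 ⊕ ℤ/3^{l+1}. -/
import Mathlib

/-- If `b` has order `3`, `c` has order `3^l`, the subgroup generated by `b, c`
is an internal direct sum isomorphic to `ℤ/3 ⊕ ℤ/3^l`, and `3a = b + c`, then
the subgroup generated by `a, b, c` is isomorphic to `ℤ/3 ⊕ ℤ/3^(l+1)`. -/
theorem stmt10 {G : Type*} [AddCommGroup G] (l : ℕ) (hl : 1 ≤ l)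
    (a b c : G) (hb : addOrderOf b = 3) (hc : addOrderOf c = 3 ^ l)
    (hdisj : AddSubgroup.zmultiples b ⊓ AddSubgroup.zmultiples c = ⊥)
    (hsum : Nonempty ((AddSubgroup.closure {b, c} : AddSubgroup G) ≃+
      (ZMod 3 × ZMod (3 ^ l))))
    (h3a : 3 • a = b + c) :
    Nonempty ((AddSubgroup.closure {a, b, c} : AddSubgroup G) ≃+
      (ZMod 3 × ZMod (3 ^ (l + 1)))) := by
  clear hsum
  obtain ⟨l', rfl⟩ : ∃ l', l = l' + 1 := ⟨l - 1, by omega⟩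
  clear hl
  set l := l' + 1 with hldef
  have h3a' : (3 : ℤ) • a = b + c := by rw [← h3a]; norm_cast
  -- basic order facts
  have hbz : ∀ m : ℤ, m • b = 0 ↔ (3 : ℤ) ∣ m := by
    intro m
    rw [← addOrderOf_dvd_iff_zsmul_eq_zero, hb]; norm_num
  have hcz : ∀ m : ℤ, m • c = 0 ↔ (3 : ℤ) ^ l ∣ m := by
    intro m
    rw [← addOrderOf_dvd_iff_zsmul_eq_zero, hc]; push_cast; rfl
  -- disjointness
  have key : ∀ p q : ℤ, p • b + q • c = 0 → p • b = 0 ∧ q • c = 0 := by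
    intro p q h
    have h1 : p • b = -(q • c) := by linear_combination (norm := abel) h
    have hmem : p • b ∈ AddSubgroup.zmultiples b ⊓ AddSubgroup.zmultiples c := by
      refine ⟨⟨p, rfl⟩, ?_⟩
      rw [h1]
      exact ⟨-q, by simp⟩
    rw [hdisj, AddSubgroup.mem_bot] at hmem
    refine ⟨hmem, ?_⟩
    rw [hmem] at h1
    simpa using h1.symm
  -- order of a
  have haord : ((3 : ℤ) ^ (l + 1)) • a = 0 := by
    have he : ((3 : ℤ) ^ (l + 1)) = 3 ^ l * 3 := by ring
    rw [he, ← smul_smul, h3a', smul_add]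
    have h1 : ((3 : ℤ) ^ l) • b = 0 := (hbz _).2 ⟨3 ^ l', by rw [hldef]; ring⟩
    have h2 : ((3 : ℤ) ^ l) • c = 0 := (hcz _).2 dvd_rfl
    rw [h1, h2, add_zero]
  -- main divisibility lemma
  have main : ∀ m n : ℤ, m • b + n • a = 0 → (3 : ℤ) ∣ m ∧ (3 : ℤ) ^ (l + 1) ∣ n := by
    intro m n h
    have h3 : (3 * m + n) • b + n • c = 0 := by
      have h5 := congrArg (fun x => (3 : ℤ) • x) h
      simp only [smul_add, smul_smul, smul_zero] at h5
      have hna : (3 * n) • a = n • (b + c) := by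
        have he : 3 * n = n * 3 := by ring
        rw [he, ← smul_smul, h3a']
      rw [hna, smul_add] at h5
      linear_combination (norm := module) h5
    obtain ⟨_, hnc⟩ := key _ _ h3
    obtain ⟨k, hk⟩ := (hcz _).1 hnc
    have h4 : (m + 3 ^ l' * k) • b + (3 ^ l' * k) • c = 0 := by
      have hna : n • a = (3 ^ l' * k) • (b + c) := by
        have he : n = (3 ^ l' * k) * 3 := by rw [hk, hldef]; ring
        rw [he, ← smul_smul, h3a']
      rw [hna, smul_add] at h
      linear_combination (norm := module) h
    obtain ⟨hb4, hc4⟩ := key _ _ h4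
    obtain ⟨t, ht⟩ := (hcz _).1 hc4
    have h3k : (3 : ℤ) ∣ k := by
      have : (3:ℤ) ^ l' * k = 3 ^ l' * (3 * t) := by rw [← mul_assoc]; linear_combination ht - t * (by rw [hldef]; ring : (3:ℤ)^l = 3^l' * 3)
      exact ⟨t, by
        have h3l : (0:ℤ) < 3 ^ l' := by positivity
        exact mul_left_cancel₀ (ne_of_gt h3l) this⟩
    constructor
    · obtain ⟨u, hu⟩ := (hbz _).1 hb4
      obtain ⟨v, hv⟩ := h3k
      exact ⟨u - 3 ^ l' * v, by linear_combination hu - 3^l' * hv⟩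
    · obtain ⟨v, hv⟩ := h3k
      refine ⟨v, ?_⟩
      rw [hk, hv, hldef]; ring
  -- the homomorphism
  have hbz3 : (zmultiplesHom G b : ℤ →+ G) ((3 : ℕ) : ℤ) = 0 := by
    simpa using (hbz 3).2 dvd_rfl
  have haz3 : (zmultiplesHom G a : ℤ →+ G) ((3 ^ (l + 1) : ℕ) : ℤ) = 0 := by
    simpa using haord
  set ψ : ZMod 3 × ZMod (3 ^ (l + 1)) →+ G :=
    ((ZMod.lift 3 ⟨zmultiplesHom G b, hbz3⟩).comp (AddMonoidHom.fst _ _)) +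
    ((ZMod.lift (3 ^ (l + 1)) ⟨zmultiplesHom G a, haz3⟩).comp (AddMonoidHom.snd _ _)) with hψ
  have hψ_apply : ∀ m n : ℤ, ψ ((m : ZMod 3), (n : ZMod (3 ^ (l + 1)))) = m • b + n • a := by
    intro m n
    rw [hψ]
    simp only [AddMonoidHom.add_apply, AddMonoidHom.coe_comp, Function.comp_apply,
      AddMonoidHom.coe_fst, AddMonoidHom.coe_snd]
    rw [ZMod.lift_coe, ZMod.lift_coe]
    simp [zmultiplesHom_apply]
  have hinj : Function.Injective ψ := by
    rw [injective_iff_map_eq_zero]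
    intro x hx
    obtain ⟨m, hm⟩ := ZMod.intCast_surjective x.1
    obtain ⟨n, hn⟩ := ZMod.intCast_surjective x.2
    have hx' : x = ((m : ZMod 3), (n : ZMod (3 ^ (l + 1)))) := by
      rw [Prod.ext_iff]; exact ⟨hm.symm, hn.symm⟩
    rw [hx', hψ_apply] at hx
    obtain ⟨h1, h2⟩ := main m n hx
    rw [hx', Prod.ext_iff]
    constructor
    · simpa using (ZMod.intCast_zmod_eq_zero_iff_dvd m 3).2 (by exact_mod_cast h1)
    · simpa using (ZMod.intCast_zmod_eq_zero_iff_dvd n (3 ^ (l + 1))).2 (by push_cast; exact h2)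
  have hrange : ψ.range = AddSubgroup.closure {a, b, c} := by
    apply le_antisymm
    · rintro _ ⟨x, rfl⟩
      obtain ⟨m, hm⟩ := ZMod.intCast_surjective x.1
      obtain ⟨n, hn⟩ := ZMod.intCast_surjective x.2
      have hx' : x = ((m : ZMod 3), (n : ZMod (3 ^ (l + 1)))) := by
        rw [Prod.ext_iff]; exact ⟨hm.symm, hn.symm⟩
      rw [hx', hψ_apply]
      have hamem : a ∈ AddSubgroup.closure ({a, b, c} : Set G) :=
        AddSubgroup.subset_closure (by simp)
      have hbmem : b ∈ AddSubgroup.closure ({a, b, c} : Set G) :=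
        AddSubgroup.subset_closure (by simp)
      exact AddSubgroup.add_mem _ (AddSubgroup.zsmul_mem _ hbmem m)
        (AddSubgroup.zsmul_mem _ hamem n)
    · rw [AddSubgroup.closure_le]
      rintro x (rfl | rfl | rfl)
      · exact ⟨(((0:ℤ) : ZMod 3), ((1:ℤ) : ZMod (3 ^ (l + 1)))), by
          rw [hψ_apply]; simp⟩
      · exact ⟨(((1:ℤ) : ZMod 3), ((0:ℤ) : ZMod (3 ^ (l + 1)))), by
          rw [hψ_apply]; simp⟩
      · refine ⟨((((-1):ℤ) : ZMod 3), ((3:ℤ) : ZMod (3 ^ (l + 1)))), ?_⟩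
        rw [hψ_apply, h3a']
        abel
  exact ⟨((AddEquiv.addSubgroupCongr hrange).symm.trans
    (AddMonoidHom.ofInjective hinj).symm)⟩
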